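/- arXiv:1310.0951 — 2 statements merged into one kernel-verified Lean document; each statement's English description precedes it below -/
import Mathlib

section
/- Let s₀(x') ≠ 0 and let a₀(ξ', ξ_n) = s₀·(ξ_n − m⁺(ξ'))(ξ_n − m⁻(ξ')) be a quadratic polynomial in ξ_n whose roots satisfy Im m⁺ > 0 and Im m⁻ < 0 (for ξ' ≠ 0). Then for ν ∈ ℂ, the function a₀^ν admits the factorization a₀^ν = s₀^ν (m⁺ − ξ_n)^ν (m⁻ − ξ_n)^ν where (m⁺(ξ') − ξ_n)^ν extends, for each fixed ξ', to an analytic function of ξ_n on the half-plane Im ξ_n < 0, and (m⁻(ξ') − ξ_n)^ν extends analytically to Im ξ_n > 0. -/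
open Complex

/-- Factorization of the `ν`-th power of a strongly elliptic second-order
principal symbol `a₀(ξₙ) = s₀ (ξₙ - m⁺)(ξₙ - m⁻)` with `Im m⁺ > 0`, `Im m⁻ < 0`:
there are functions `f`, `g` — branches of `(m⁺ - ξₙ)^ν` resp. `(m⁻ - ξₙ)^ν` — with `f`
continuous on `{Im ξₙ ≤ 0}` and analytic on `{Im ξₙ < 0}`, `g` continuous on `{Im ξₙ ≥ 0}`
and analytic on `{Im ξₙ > 0}`, such that `a₀^ν = s₀^ν f g` on the real axis (all powers
taken with respect to some branch of the logarithm). -/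
theorem stmt8 (s₀ mp mm ν : ℂ) (hs : s₀ ≠ 0) (hmp : 0 < mp.im) (hmm : mm.im < 0)
    (a₀ : ℂ → ℂ) (ha : ∀ z, a₀ z = s₀ * (z - mp) * (z - mm)) :
    ∃ f g : ℂ → ℂ,
      ContinuousOn f {z : ℂ | z.im ≤ 0} ∧ DifferentiableOn ℂ f {z : ℂ | z.im < 0} ∧
      ContinuousOn g {z : ℂ | 0 ≤ z.im} ∧ DifferentiableOn ℂ g {z : ℂ | 0 < z.im} ∧
      (∀ z : ℂ, z.im ≤ 0 → ∃ w : ℂ, Complex.exp w = mp - z ∧ f z = Complex.exp (ν * w)) ∧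
      (∀ z : ℂ, 0 ≤ z.im → ∃ w : ℂ, Complex.exp w = mm - z ∧ g z = Complex.exp (ν * w)) ∧
      (∀ x : ℝ, ∃ w : ℂ, Complex.exp w = a₀ x ∧
        Complex.exp (ν * w) = Complex.exp (ν * Complex.log s₀) * f x * g x) := by
  refine ⟨fun z => Complex.exp (ν * Complex.log (mp - z)),
    fun z => Complex.exp (ν * Complex.log (mm - z)), ?_, ?_, ?_, ?_, ?_, ?_, ?_⟩
  · intro z hz
    have h : (mp - z) ∈ Complex.slitPlane := by
      simp only [Complex.mem_slitPlane_iff, Complex.sub_im]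
      right; have hz' : z.im ≤ 0 := hz; linarith
    exact (continuousAt_const.mul ((Complex.differentiableAt_log h).continuousAt.comp
      ((continuous_const.sub continuous_id).continuousAt))).cexp.continuousWithinAt
  · intro z hz
    have h : (mp - z) ∈ Complex.slitPlane := by
      simp only [Complex.mem_slitPlane_iff, Complex.sub_im]
      right; have hz' : z.im < 0 := hz; linarith
    exact (((Complex.differentiableAt_log h).comp z
      ((differentiable_const mp).sub differentiable_id).differentiableAt).const_mul
      ν).cexp.differentiableWithinAt
  · intro z hz
    have h : (mm - z) ∈ Complex.slitPlane := by
      simp only [Complex.mem_slitPlane_iff, Complex.sub_im]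
      right; have hz' : 0 ≤ z.im := hz; linarith
    exact (continuousAt_const.mul ((Complex.differentiableAt_log h).continuousAt.comp
      ((continuous_const.sub continuous_id).continuousAt))).cexp.continuousWithinAt
  · intro z hz
    have h : (mm - z) ∈ Complex.slitPlane := by
      simp only [Complex.mem_slitPlane_iff, Complex.sub_im]
      right; have hz' : 0 < z.im := hz; linarith
    exact (((Complex.differentiableAt_log h).comp z
      ((differentiable_const mm).sub differentiable_id).differentiableAt).const_mul
      ν).cexp.differentiableWithinAt
  · intro z hz
    exact ⟨Complex.log (mp - z), Complex.exp_log (by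
      intro h; have := congrArg Complex.im h; simp [Complex.sub_im] at this; linarith), rfl⟩
  · intro z hz
    exact ⟨Complex.log (mm - z), Complex.exp_log (by
      intro h; have := congrArg Complex.im h; simp [Complex.sub_im] at this; linarith), rfl⟩
  · intro x
    have h1 : (mp - (x : ℂ)) ≠ 0 := by
      intro h; have := congrArg Complex.im h; simp [Complex.sub_im] at this; linarith
    have h2 : (mm - (x : ℂ)) ≠ 0 := by
      intro h; have := congrArg Complex.im h; simp [Complex.sub_im] at this; linarith
    refine ⟨Complex.log s₀ + Complex.log (mp - x) + Complex.log (mm - x), ?_, ?_⟩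
    · rw [Complex.exp_add, Complex.exp_add, Complex.exp_log hs, Complex.exp_log h1,
        Complex.exp_log h2, ha]
      ring
    · rw [mul_add, mul_add, Complex.exp_add, Complex.exp_add]
end

section
/- With notation as in the previous setting, if q = q⁻ q⁺ where q⁺(D), (1/q⁺)(D) preserve support in [0,∞) and q⁻(D), (1/q⁻)(D) preserve support in (−∞,0], then the truncated operator q(D)₊ := r⁺ q(D) e⁺ on L²(0,∞) factors as q(D)₊ = (r⁺ q⁻(D) e⁺)(r⁺ q⁺(D) e⁺), and hence is invertible with inverse (r⁺ (1/q⁺)(D) e⁺)(r⁺ (1/q⁻)(D) e⁺). -/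
open MeasureTheory

/-- `r⁺`/`e⁺`-truncation on `L²(ℝ)`: restriction to `(0,∞)` followed by extension by zero. -/
noncomputable def trunc17 (f : Lp ℂ 2 (volume : Measure ℝ)) : Lp ℂ 2 (volume : Measure ℝ) :=
  MeasureTheory.MemLp.toLp ((Set.Ioi (0:ℝ)).indicator f)
    ((MeasureTheory.Lp.memLp f).indicator measurableSet_Ioi)

/- Write `P` for `trunc17`, the orthogonal projection onto functions supported in `[0,∞)`.
A causal operator `T` (preserving support in `[0,∞)`) satisfies `P T P = T P`, and an anticausal
one (preserving support in `(-∞,0]`) satisfies `P T P = P T`, because `T (f - P f)` vanishes on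
`(0,∞)`. Hence `P q(D) P = P q⁻(D) q⁺(D) P = (P q⁻(D) P)(P q⁺(D) P)`, and the same two rules
collapse the products with the truncated inverses to `P (1/q⁺)(D) q⁺(D) P = P` and
`P q⁻(D) (1/q⁻)(D) P = P`. -/

section Trunc17

variable {f : Lp ℂ 2 (volume : Measure ℝ)}

lemma coeFn_trunc17 (f : Lp ℂ 2 (volume : Measure ℝ)) :
    (trunc17 f : ℝ → ℂ) =ᵐ[volume] (Set.Ioi (0:ℝ)).indicator f :=
  MemLp.coeFn_toLp _

lemma ae_trunc17_apply_eq_zero_of_neg (f : Lp ℂ 2 (volume : Measure ℝ)) :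
    ∀ᵐ x : ℝ, x < 0 → trunc17 f x = 0 := by
  filter_upwards [coeFn_trunc17 f] with x hx hx0
  rw [hx, Set.indicator_of_notMem (by simpa using hx0.le)]

lemma trunc17_eq_self (h : ∀ᵐ x : ℝ, x < 0 → f x = 0) : trunc17 f = f := by
  refine Lp.ext ?_
  have hne : ∀ᵐ x : ℝ, x ≠ 0 := by simp [ae_iff, measure_singleton]
  filter_upwards [coeFn_trunc17 f, h, hne] with x hx hneg hx0
  rw [hx]
  rcases hx0.lt_or_gt with hlt | hgt
  · rw [Set.indicator_of_notMem (by simpa using hlt.le), hneg hlt]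
  · exact Set.indicator_of_mem hgt _

lemma trunc17_eq_zero (h : ∀ᵐ x : ℝ, 0 < x → f x = 0) : trunc17 f = 0 := by
  refine Lp.ext ?_
  filter_upwards [coeFn_trunc17 f, h, Lp.coeFn_zero ℂ 2 (volume : Measure ℝ)] with x hx hpos hzero
  rw [hx, hzero, Pi.zero_apply, Set.indicator_apply_eq_zero]
  exact hpos

lemma trunc17_trunc17 (f : Lp ℂ 2 (volume : Measure ℝ)) : trunc17 (trunc17 f) = trunc17 f :=
  trunc17_eq_self (ae_trunc17_apply_eq_zero_of_neg f)

lemma trunc17_sub (f g : Lp ℂ 2 (volume : Measure ℝ)) :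
    trunc17 (f - g) = trunc17 f - trunc17 g := by
  refine Lp.ext ?_
  filter_upwards [coeFn_trunc17 (f - g), coeFn_trunc17 f, coeFn_trunc17 g, Lp.coeFn_sub f g,
    Lp.coeFn_sub (trunc17 f) (trunc17 g)] with x h h₁ h₂ hsub hsub'
  rw [h, hsub', Pi.sub_apply, h₁, h₂]
  by_cases hx : x ∈ Set.Ioi (0:ℝ)
  · simp only [Set.indicator_of_mem hx, hsub, Pi.sub_apply]
  · simp only [Set.indicator_of_notMem hx, sub_zero]

lemma ae_sub_trunc17_apply_eq_zero_of_pos (f : Lp ℂ 2 (volume : Measure ℝ)) :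
    ∀ᵐ x : ℝ, 0 < x → (f - trunc17 f) x = 0 := by
  filter_upwards [coeFn_trunc17 f, Lp.coeFn_sub f (trunc17 f)] with x h hsub hx
  rw [hsub, Pi.sub_apply, h, Set.indicator_of_mem (Set.mem_Ioi.2 hx), sub_self]

variable {F : Type*} [FunLike F (Lp ℂ 2 (volume : Measure ℝ)) (Lp ℂ 2 (volume : Measure ℝ))]

lemma trunc17_map_trunc17_of_causal {T : F}
    (hT : ∀ f : Lp ℂ 2 (volume : Measure ℝ),
      (∀ᵐ x : ℝ, x < 0 → f x = 0) → ∀ᵐ x : ℝ, x < 0 → T f x = 0)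
    (f : Lp ℂ 2 (volume : Measure ℝ)) :
    trunc17 (T (trunc17 f)) = T (trunc17 f) :=
  trunc17_eq_self (hT _ (ae_trunc17_apply_eq_zero_of_neg f))

lemma trunc17_map_trunc17_of_anticausal [AddMonoidHomClass F _ _] {T : F}
    (hT : ∀ f : Lp ℂ 2 (volume : Measure ℝ),
      (∀ᵐ x : ℝ, 0 < x → f x = 0) → ∀ᵐ x : ℝ, 0 < x → T f x = 0)
    (f : Lp ℂ 2 (volume : Measure ℝ)) :
    trunc17 (T (trunc17 f)) = trunc17 (T f) := by
  have hsplit : T (trunc17 f) = T f - T (f - trunc17 f) := by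
    rw [← map_sub, sub_sub_cancel]
  rw [hsplit, trunc17_sub, trunc17_eq_zero (hT _ (ae_sub_trunc17_apply_eq_zero_of_pos f)),
    sub_zero]

end Trunc17

/-- If `q = q⁻ q⁺`, so that `q(D) = q⁻(D) ∘ q⁺(D)`, where `q⁺(D), (1/q⁺)(D)`
preserve support in `[0,∞)` and `q⁻(D), (1/q⁻)(D)` preserve support in `(-∞,0]`, then the
truncated operator `q(D)₊ = r⁺ q(D) e⁺` on `L²(0,∞)` factors as
`q(D)₊ = (r⁺q⁻(D)e⁺)(r⁺q⁺(D)e⁺)`, and hence is invertible with inverse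
`(r⁺(1/q⁺)(D)e⁺)(r⁺(1/q⁻)(D)e⁺)`. -/
theorem stmt17
    (Tq Tp Sp Tm Sm : Lp ℂ 2 (volume : Measure ℝ) →L[ℂ] Lp ℂ 2 (volume : Measure ℝ))
    (hfact : ∀ f, Tq f = Tm (Tp f))
    (hTSp : ∀ f, Tp (Sp f) = f) (hSTp : ∀ f, Sp (Tp f) = f)
    (hTSm : ∀ f, Tm (Sm f) = f) (hSTm : ∀ f, Sm (Tm f) = f)
    (hTp : ∀ f : Lp ℂ 2 (volume : Measure ℝ),
      (∀ᵐ x : ℝ, x < 0 → f x = 0) → (∀ᵐ x : ℝ, x < 0 → (Tp f) x = 0))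
    (hSp : ∀ f : Lp ℂ 2 (volume : Measure ℝ),
      (∀ᵐ x : ℝ, x < 0 → f x = 0) → (∀ᵐ x : ℝ, x < 0 → (Sp f) x = 0))
    (hTm : ∀ f : Lp ℂ 2 (volume : Measure ℝ),
      (∀ᵐ x : ℝ, 0 < x → f x = 0) → (∀ᵐ x : ℝ, 0 < x → (Tm f) x = 0))
    (hSm : ∀ f : Lp ℂ 2 (volume : Measure ℝ),
      (∀ᵐ x : ℝ, 0 < x → f x = 0) → (∀ᵐ x : ℝ, 0 < x → (Sm f) x = 0)) :
    ∀ f : Lp ℂ 2 (volume : Measure ℝ),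
      trunc17 (Tq (trunc17 f)) = trunc17 (Tm (trunc17 (Tp (trunc17 f)))) ∧
      trunc17 (Sp (trunc17 (Sm (trunc17 (Tq (trunc17 f)))))) = trunc17 f ∧
      trunc17 (Tq (trunc17 (Sp (trunc17 (Sm (trunc17 f)))))) = trunc17 f := by
  intro f
  have hTp' := trunc17_map_trunc17_of_causal hTp
  have hSp' := trunc17_map_trunc17_of_causal hSp
  have hTm' := trunc17_map_trunc17_of_anticausal hTm
  have hSm' := trunc17_map_trunc17_of_anticausal hSm
  refine ⟨?factor, ?left_inverse, ?right_inverse⟩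
  case factor => rw [hfact, hTp']
  case left_inverse => rw [hfact, hSm', hSTm, hTp', hSTp, trunc17_trunc17]
  case right_inverse => rw [hSp', hfact, hTSp, hTm', hTSm, trunc17_trunc17]
end
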